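/- arXiv:1905.05929 — 4 statements merged into one kernel-verified Lean document; each statement's English description precedes it below -/
import Mathlib

section
/- Let (Z, 𝒜) be a measurable space, μ a probability measure on Z, and ℓ : Z → ℝ a measurable loss with 0 ≤ ℓ(z) ≤ M for all z ∈ Z. Suppose Z is partitioned into K measurable sets C_1, …, C_K, and ε ≥ 0 is such that for every k and all z, z' ∈ C_k one has |ℓ(z) − ℓ(z')| ≤ ε. Then for every ν ∈ (0,1), with probability at least 1 − ν over a sample (z_1, …, z_m) drawn i.i.d. from μ (i.e. with respect to the product measure μ^{⊗m} on Z^m), one has |∫_Z ℓ dμ − (1/m)·∑_{i=1}^m ℓ(z_i)| ≤ ε + M·√((2K·ln 2 + 2·ln(1/ν))/m). -/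
open MeasureTheory

open Real

-- pointwise convexity bound
lemma aux_exp_le_cosh_add (c B x : ℝ) (hB : 0 < B) (hx : |x| ≤ B) :
    Real.exp (c * x) ≤ Real.cosh (c * B) + (x / B) * Real.sinh (c * B) := by
  have hxB : |x / B| ≤ 1 := by
    rw [abs_div, abs_of_pos hB]
    exact (div_le_one hB).2 hx
  have h1 : -1 ≤ x / B := (abs_le.1 hxB).1
  have h2 : x / B ≤ 1 := (abs_le.1 hxB).2
  have ha : (0:ℝ) ≤ (1 - x / B) / 2 := by linarith
  have hb : (0:ℝ) ≤ (1 + x / B) / 2 := by linarith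
  have hab : (1 - x / B) / 2 + (1 + x / B) / 2 = 1 := by ring
  have key := convexOn_exp.2 (Set.mem_univ (-(c * B))) (Set.mem_univ (c * B)) ha hb hab
  have hBne : B ≠ 0 := hB.ne'
  simp only [smul_eq_mul] at key
  have harg : (1 - x / B) / 2 * -(c * B) + (1 + x / B) / 2 * (c * B) = c * x := by
    field_simp
    ring
  rw [harg] at key
  refine key.trans_eq ?_
  rw [Real.cosh_eq, Real.sinh_eq]
  ring

-- mgf bound (Hoeffding-lite via cosh)
lemma aux_mgf_le {Z : Type*} [MeasurableSpace Z] (μ : Measure Z) [IsProbabilityMeasure μ]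
    (g : Z → ℝ) (hg : Measurable g) (B : ℝ) (hB : 0 < B) (hgB : ∀ z, |g z| ≤ B)
    (hmean : ∫ z, g z ∂μ = 0) (c : ℝ) :
    ∫ z, Real.exp (c * g z) ∂μ ≤ Real.exp (c ^ 2 * B ^ 2 / 2) := by
  have hgint : Integrable g μ := by
    refine (integrable_const B).mono' hg.aestronglyMeasurable ?_
    exact Filter.Eventually.of_forall fun z => by simpa using hgB z
  have hexpint : Integrable (fun z => Real.exp (c * g z)) μ := by
    refine (integrable_const (Real.exp (|c| * B))).mono'
      ((hg.const_mul c).exp).aestronglyMeasurable ?_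
    refine Filter.Eventually.of_forall fun z => ?_
    rw [Real.norm_eq_abs, abs_of_pos (Real.exp_pos _), Real.exp_le_exp]
    calc c * g z ≤ |c * g z| := le_abs_self _
      _ = |c| * |g z| := abs_mul _ _
      _ ≤ |c| * B := by gcongr; exact hgB z
  have hrhsint : Integrable (fun z => Real.cosh (c * B) + (g z / B) * Real.sinh (c * B)) μ := by
    exact (integrable_const _).add ((hgint.div_const B).mul_const _)
  calc ∫ z, Real.exp (c * g z) ∂μ
      ≤ ∫ z, (Real.cosh (c * B) + (g z / B) * Real.sinh (c * B)) ∂μ := by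
        refine integral_mono hexpint hrhsint fun z => ?_
        exact aux_exp_le_cosh_add c B (g z) hB (hgB z)
    _ = Real.cosh (c * B) := by
        rw [integral_add (integrable_const _) ((hgint.div_const B).mul_const _),
          integral_const, integral_mul_const, integral_div, hmean]
        simp
    _ ≤ Real.exp ((c * B) ^ 2 / 2) := Real.cosh_le_exp_half_sq _
    _ = Real.exp (c ^ 2 * B ^ 2 / 2) := by ring_nf

-- one-sided tail bound on product space
lemma aux_tail {Z : Type*} [MeasurableSpace Z] (μ : Measure Z) [IsProbabilityMeasure μ]
    (g : Z → ℝ) (hg : Measurable g) (B : ℝ) (hB : 0 < B) (hgB : ∀ z, |g z| ≤ B)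
    (hmean : ∫ z, g z ∂μ = 0) (m : ℕ) (t : ℝ) (ht : 0 ≤ t) :
    (Measure.pi fun _ : Fin m => μ) {ω : Fin m → Z | (m : ℝ) * t ≤ ∑ i, g (ω i)} ≤
      ENNReal.ofReal (Real.exp (-(m : ℝ) * t ^ 2 / (2 * B ^ 2))) := by
  letI : MeasureSpace Z := ⟨μ⟩
  have hvol : (Measure.pi fun _ : Fin m => μ) = (volume : Measure (Fin m → Z)) := rfl
  set c : ℝ := t / B ^ 2 with hc
  have hc0 : 0 ≤ c := div_nonneg ht (by positivity)
  -- integrability of exp (c * sum)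
  have hmeasX : Measurable fun ω : Fin m → Z => ∑ i, g (ω i) :=
    Finset.measurable_sum _ fun i _ => hg.comp (measurable_pi_apply i)
  have hprod : ∀ ω : Fin m → Z, Real.exp (c * ∑ i, g (ω i)) = ∏ i, Real.exp (c * g (ω i)) := by
    intro ω
    rw [Finset.mul_sum, Real.exp_sum]
  have hint1 : Integrable (fun z => Real.exp (c * g z)) (volume : Measure Z) := by
    refine (integrable_const (Real.exp (|c| * B))).mono'
      ((hg.const_mul c).exp).aestronglyMeasurable ?_
    refine Filter.Eventually.of_forall fun z => ?_
    rw [Real.norm_eq_abs, abs_of_pos (Real.exp_pos _), Real.exp_le_exp]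
    calc c * g z ≤ |c * g z| := le_abs_self _
      _ = |c| * |g z| := abs_mul _ _
      _ ≤ |c| * B := by gcongr; exact hgB z
  have hint : Integrable (fun ω : Fin m → Z => Real.exp (c * ∑ i, g (ω i)))
      (volume : Measure (Fin m → Z)) := by
    simp_rw [hprod]
    exact Integrable.fintype_prod (f := fun _ : Fin m => fun z => Real.exp (c * g z))
      fun i => hint1
  have chern := ProbabilityTheory.measure_ge_le_exp_mul_mgf
    (μ := (volume : Measure (Fin m → Z))) (X := fun ω => ∑ i, g (ω i))
    ((m : ℝ) * t) hc0 hint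
  have hmgf : ProbabilityTheory.mgf (fun ω : Fin m → Z => ∑ i, g (ω i)) volume c
      = (∫ z, Real.exp (c * g z) ∂(volume : Measure Z)) ^ m := by
    unfold ProbabilityTheory.mgf
    simp_rw [hprod]
    rw [volume_pi, integral_fintype_prod_eq_pow (ι := Fin m) (fun z => Real.exp (c * g z))]
    simp
  have hmgf_le : ProbabilityTheory.mgf (fun ω : Fin m → Z => ∑ i, g (ω i)) volume c
      ≤ Real.exp (c ^ 2 * B ^ 2 / 2) ^ m := by
    rw [hmgf]
    refine pow_le_pow_left₀ ?_ (aux_mgf_le μ g hg B hB hgB hmean c) m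
    positivity
  have hbound : Real.exp (-c * ((m : ℝ) * t)) *
      ProbabilityTheory.mgf (fun ω : Fin m → Z => ∑ i, g (ω i)) volume c
      ≤ Real.exp (-(m : ℝ) * t ^ 2 / (2 * B ^ 2)) := by
    calc Real.exp (-c * ((m : ℝ) * t)) *
        ProbabilityTheory.mgf (fun ω : Fin m → Z => ∑ i, g (ω i)) volume c
        ≤ Real.exp (-c * ((m : ℝ) * t)) * Real.exp (c ^ 2 * B ^ 2 / 2) ^ m := by
          exact mul_le_mul_of_nonneg_left hmgf_le (Real.exp_pos _).le
      _ = Real.exp (-c * ((m : ℝ) * t) + (m : ℝ) * (c ^ 2 * B ^ 2 / 2)) := by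
          rw [← Real.exp_nat_mul, ← Real.exp_add, mul_comm (m : ℝ)]
      _ = Real.exp (-(m : ℝ) * t ^ 2 / (2 * B ^ 2)) := by
          congr 1
          rw [hc]
          field_simp
          ring
  have hfin : (volume : Measure (Fin m → Z)) {ω | (m : ℝ) * t ≤ ∑ i, g (ω i)} ≠ ⊤ :=
    measure_ne_top _ _
  rw [hvol]
  rw [← ENNReal.ofReal_toReal hfin]
  exact ENNReal.ofReal_le_ofReal (chern.trans hbound)

/-- paper's Theorem 2.1: generalization bound for robust algorithms.
If a bounded measurable loss `ℓ : Z → [0, M]` varies by at most `ε` on each cell of a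
measurable `K`-cell partition of `Z`, then with probability at least `1 - ν` over an
i.i.d. sample of size `m` from `μ`, the gap between the expected and empirical loss is
at most `ε + M·√((2K·ln 2 + 2·ln(1/ν))/m)`. -/
theorem stmt0 {Z : Type*} [MeasurableSpace Z] (μ : Measure Z) [IsProbabilityMeasure μ]
    (ℓ : Z → ℝ) (hℓmeas : Measurable ℓ) (M : ℝ)
    (hℓbd : ∀ z, 0 ≤ ℓ z ∧ ℓ z ≤ M)
    (K : ℕ) (C : Fin K → Set Z)
    (hCmeas : ∀ k, MeasurableSet (C k))
    (hCdisj : Pairwise (Function.onFun Disjoint C))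
    (hCcover : (⋃ k, C k) = Set.univ)
    (ε : ℝ) (hε : 0 ≤ ε)
    (hrobust : ∀ k : Fin K, ∀ z ∈ C k, ∀ z' ∈ C k, |ℓ z - ℓ z'| ≤ ε)
    (m : ℕ) (hm : 0 < m) (ν : ℝ) (hν : ν ∈ Set.Ioo (0 : ℝ) 1) :
    ENNReal.ofReal (1 - ν) ≤
      (Measure.pi fun _ : Fin m => μ)
        {ω : Fin m → Z |
          |(∫ z, ℓ z ∂μ) - (1 / m) * ∑ i, ℓ (ω i)| ≤
            ε + M * Real.sqrt ((2 * K * Real.log 2 + 2 * Real.log (1 / ν)) / m)} := by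
  obtain ⟨hν0, hν1⟩ := hν
  -- Z is nonempty and K ≥ 1
  have hZ : Nonempty Z := by
    by_contra h
    rw [not_nonempty_iff] at h
    have h1 := measure_univ (μ := μ)
    rw [Set.univ_eq_empty_iff.mpr h, measure_empty] at h1
    exact zero_ne_one h1
  obtain ⟨z₀⟩ := hZ
  have hz₀ : z₀ ∈ ⋃ k, C k := hCcover ▸ Set.mem_univ z₀
  obtain ⟨k₀, hk₀⟩ := Set.mem_iUnion.1 hz₀
  have hK : 1 ≤ K := k₀.pos
  have hM0 : 0 ≤ M := le_trans (hℓbd z₀).1 (hℓbd z₀).2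
  set c : ℝ := 2 * K * Real.log 2 + 2 * Real.log (1 / ν) with hcdef
  have hlog2 : 0 < Real.log 2 := Real.log_pos one_lt_two
  have hlogν : 0 < Real.log (1 / ν) := Real.log_pos (by rw [lt_div_iff₀ hν0]; linarith)
  have hc0 : 0 < c := by
    rw [hcdef]
    have h2 : (0:ℝ) ≤ 2 * K * Real.log 2 := by positivity
    linarith
  set t : ℝ := M * Real.sqrt (c / m) with htdef
  have hν1' : ENNReal.ofReal (1 - ν) ≤ 1 := ENNReal.ofReal_le_one.mpr (by linarith)
  have hmpos : (0:ℝ) < m := Nat.cast_pos.mpr hm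
  rcases eq_or_lt_of_le hM0 with hM | hM
  · -- M = 0 : ℓ ≡ 0, the event is everything
    have hℓ0 : ∀ z, ℓ z = 0 := fun z => le_antisymm (hM ▸ (hℓbd z).2) (hℓbd z).1
    have hset : {ω : Fin m → Z |
        |(∫ z, ℓ z ∂μ) - (1 / m) * ∑ i, ℓ (ω i)| ≤ ε + t} = Set.univ := by
      ext ω
      simp only [Set.mem_setOf_eq, Set.mem_univ, iff_true]
      have h1 : (∫ z, ℓ z ∂μ) = 0 := by simp [hℓ0]
      have h2 : ∑ i : Fin m, ℓ (ω i) = 0 := by simp [hℓ0]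
      rw [h1, h2]
      simp only [mul_zero, sub_zero, abs_zero]
      have : t = 0 := by rw [htdef, ← hM]; ring
      linarith
    rw [hset, measure_univ]
    exact hν1'
  · -- main case M > 0
    set Eℓ : ℝ := ∫ z, ℓ z ∂μ with hEdef
    have hℓint : Integrable ℓ μ := by
      refine (integrable_const M).mono' hℓmeas.aestronglyMeasurable ?_
      exact Filter.Eventually.of_forall fun z => by
        rw [Real.norm_eq_abs, abs_of_nonneg (hℓbd z).1]; exact (hℓbd z).2
    have hE0 : 0 ≤ Eℓ := integral_nonneg fun z => (hℓbd z).1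
    have hEM : Eℓ ≤ M := by
      calc Eℓ ≤ ∫ _, M ∂μ := integral_mono hℓint (integrable_const M) fun z => (hℓbd z).2
        _ = M := by simp
    set g : Z → ℝ := fun z => ℓ z - Eℓ with hgdef
    have hgmeas : Measurable g := hℓmeas.sub measurable_const
    have hgB : ∀ z, |g z| ≤ M := by
      intro z
      simp only [hgdef]
      rw [abs_le]
      constructor
      · linarith [(hℓbd z).1]
      · linarith [(hℓbd z).2]
    have hgmean : ∫ z, g z ∂μ = 0 := by
      rw [hgdef]
      rw [integral_sub hℓint (integrable_const Eℓ)]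
      simp [hEdef]
    have ht0 : 0 ≤ t := by positivity
    have hA := aux_tail μ g hgmeas M hM hgB hgmean m t ht0
    have hgneg : ∀ z, |(-g) z| ≤ M := fun z => by simpa using hgB z
    have hgnegmean : ∫ z, (-g) z ∂μ = 0 := by simp [integral_neg, hgmean]
    have hB := aux_tail μ (-g) hgmeas.neg M hM hgneg hgnegmean m t ht0
    set P : Measure (Fin m → Z) := Measure.pi fun _ : Fin m => μ with hPdef
    set S : Set (Fin m → Z) :=
      {ω | |Eℓ - (1 / m) * ∑ i, ℓ (ω i)| ≤ ε + t} with hSdef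
    have hSmeas : MeasurableSet S := by
      refine measurableSet_le ?_ measurable_const
      exact (measurable_const.sub
        ((Finset.measurable_sum Finset.univ fun i _ =>
          hℓmeas.comp (measurable_pi_apply i)).const_mul (1 / m))).abs
    -- complement inclusion
    have hsub : Sᶜ ⊆ {ω : Fin m → Z | (m : ℝ) * t ≤ ∑ i, g (ω i)} ∪
        {ω : Fin m → Z | (m : ℝ) * t ≤ ∑ i, (-g) (ω i)} := by
      intro ω hω
      simp only [hSdef, Set.mem_compl_iff, Set.mem_setOf_eq, not_le] at hω
      have hsum : ∑ i, g (ω i) = (∑ i, ℓ (ω i)) - m * Eℓ := by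
        simp [hgdef, Finset.sum_sub_distrib]
      have habs : t < |(1 / m) * ∑ i, ℓ (ω i) - Eℓ| := by
        rw [abs_sub_comm] at hω
        linarith
      have heq : (1 / m) * ∑ i, ℓ (ω i) - Eℓ = (1 / m) * ∑ i, g (ω i) := by
        rw [hsum]
        field_simp
      rw [heq] at habs
      have hmt : (m:ℝ) * t < |∑ i, g (ω i)| := by
        rw [abs_mul, abs_of_pos (by positivity : (0:ℝ) < 1 / m)] at habs
        calc (m:ℝ) * t < (m:ℝ) * (1 / m * |∑ i, g (ω i)|) := by
              exact (mul_lt_mul_iff_right₀ hmpos).mpr habs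
          _ = |∑ i, g (ω i)| := by field_simp
      rcases le_or_gt 0 (∑ i, g (ω i)) with h | h
      · left
        rw [Set.mem_setOf_eq]
        rw [abs_of_nonneg h] at hmt
        exact hmt.le
      · right
        rw [Set.mem_setOf_eq]
        rw [abs_of_neg h] at hmt
        simp only [Pi.neg_apply]
        rw [Finset.sum_neg_distrib]
        exact hmt.le
    -- numeric bound
    have hexp : Real.exp (-(m : ℝ) * t ^ 2 / (2 * M ^ 2)) ≤ ν / 2 := by
      have hsq : Real.sqrt (c / m) ^ 2 = c / m :=
        Real.sq_sqrt (by positivity)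
      have harg : -(m : ℝ) * t ^ 2 / (2 * M ^ 2) = -(c / 2) := by
        rw [htdef, mul_pow, hsq]
        field_simp
      rw [harg]
      have hc2 : -(c / 2) = -((K : ℝ) * Real.log 2) + -(Real.log (1 / ν)) := by
        rw [hcdef]; ring
      rw [hc2, Real.exp_add]
      have h1 : Real.exp (-((K : ℝ) * Real.log 2)) = ((2:ℝ) ^ K)⁻¹ := by
        rw [Real.exp_neg, Real.exp_nat_mul, Real.exp_log two_pos]
      have h2 : Real.exp (-Real.log (1 / ν)) = ν := by
        rw [Real.exp_neg, Real.exp_log (by positivity), one_div, inv_inv]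
      rw [h1, h2]
      have h3 : (2:ℝ) ≤ 2 ^ K := by
        calc (2:ℝ) = 2 ^ 1 := (pow_one 2).symm
          _ ≤ 2 ^ K := pow_le_pow_right₀ one_le_two hK
      rw [inv_mul_eq_div, div_le_div_iff₀ (by positivity) two_pos]
      nlinarith
    have hcompl : P Sᶜ ≤ ENNReal.ofReal ν := by
      calc P Sᶜ ≤ P ({ω : Fin m → Z | (m : ℝ) * t ≤ ∑ i, g (ω i)} ∪
            {ω : Fin m → Z | (m : ℝ) * t ≤ ∑ i, (-g) (ω i)}) := measure_mono hsub
        _ ≤ P {ω : Fin m → Z | (m : ℝ) * t ≤ ∑ i, g (ω i)} +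
            P {ω : Fin m → Z | (m : ℝ) * t ≤ ∑ i, (-g) (ω i)} := measure_union_le _ _
        _ ≤ ENNReal.ofReal (Real.exp (-(m : ℝ) * t ^ 2 / (2 * M ^ 2))) +
            ENNReal.ofReal (Real.exp (-(m : ℝ) * t ^ 2 / (2 * M ^ 2))) := add_le_add hA hB
        _ = ENNReal.ofReal (Real.exp (-(m : ℝ) * t ^ 2 / (2 * M ^ 2)) +
            Real.exp (-(m : ℝ) * t ^ 2 / (2 * M ^ 2))) :=
            (ENNReal.ofReal_add (Real.exp_pos _).le (Real.exp_pos _).le).symm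
        _ ≤ ENNReal.ofReal ν := ENNReal.ofReal_le_ofReal (by linarith)
    have hPS : P Sᶜ = 1 - P S := prob_compl_eq_one_sub hSmeas
    have h1 : (1 : ENNReal) ≤ P S + ENNReal.ofReal ν := by
      rw [hPS] at hcompl
      calc (1 : ENNReal) ≤ ENNReal.ofReal ν + P S := tsub_le_iff_right.mp hcompl
        _ = P S + ENNReal.ofReal ν := add_comm _ _
    have h2 : ENNReal.ofReal (1 - ν) = 1 - ENNReal.ofReal ν := by
      rw [ENNReal.ofReal_sub _ hν0.le, ENNReal.ofReal_one]
    rw [h2]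
    exact tsub_le_iff_right.mpr h1
end

section
/- Let (X, d) be a metric space, Y a finite set, F a real normed vector space, and T : X → F a map satisfying the δ-isometry property |‖T x − T x'‖ − d(x, x')| ≤ δ for all x, x' ∈ X, for some δ ≥ 0. Let h : F × Y → ℝ satisfy |h(u, y) − h(v, y)| ≤ A·‖u − v‖ for all u, v ∈ F and all y ∈ Y, where A ≥ 0. Suppose X is covered by N sets each of diameter at most γ. Then X × Y can be partitioned into at most |Y|·N sets such that whenever (x, y) and (x', y') belong to the same set of the partition, |h(T x, y) − h(T x', y')| ≤ A·(γ + δ). -/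
/-!
Choose for every `x` a cover set `U (g x)` containing it and cut `X × Y` into the fibers of
`(x, y) ↦ (g x, y)`. Two points of a fiber share their label and lie in one cover set, so their
representations are `γ + δ`-close by the `δ`-isometry property, and the Lipschitz bound on `h`
finishes.
-/

theorem exists_fin_partition_of_fibers {α β : Type*} [Fintype β] (f : α → β) :
    ∃ D : Fin (Fintype.card β) → Set α,
      Pairwise (Function.onFun Disjoint D) ∧ (⋃ k, D k) = Set.univ ∧
      ∀ k, ∀ p ∈ D k, ∀ q ∈ D k, f p = f q := by
  set e := (Fintype.equivFin β).symm
  refine ⟨fun k => f ⁻¹' {e k}, fun k k' hkk' => ?_, ?_, fun k p hp q hq => hp.trans hq.symm⟩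
  · exact Set.disjoint_left.mpr fun p hp hp' => hkk' (e.injective (hp.symm.trans hp'))
  · exact Set.iUnion_eq_univ_iff.mpr fun p => ⟨e.symm (f p), by simp⟩

theorem norm_sub_le_dist_add_of_abs_sub_le {X F : Type*} [PseudoMetricSpace X]
    [SeminormedAddCommGroup F] {T : X → F} {δ : ℝ}
    (hiso : ∀ x x' : X, |‖T x - T x'‖ - dist x x'| ≤ δ) (x x' : X) :
    ‖T x - T x'‖ ≤ dist x x' + δ := by
  linarith [(abs_le.mp (hiso x x')).2]

theorem abs_sub_le_of_lipschitz_of_norm_sub_le {F Y : Type*} [SeminormedAddCommGroup F]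
    {h : F → Y → ℝ} {A : ℝ} (hA : 0 ≤ A)
    (hlip : ∀ u v : F, ∀ y : Y, |h u y - h v y| ≤ A * ‖u - v‖)
    {u v : F} {r : ℝ} (huv : ‖u - v‖ ≤ r) (y : Y) :
    |h u y - h v y| ≤ A * r :=
  (hlip u v y).trans (mul_le_mul_of_nonneg_left huv hA)

theorem stmt1_general {X : Type*} [MetricSpace X] {Y : Type*} [Fintype Y]
    {F : Type*} [NormedAddCommGroup F] [NormedSpace ℝ F]
    (T : X → F) (δ : ℝ)
    (hiso : ∀ x x' : X, |‖T x - T x'‖ - dist x x'| ≤ δ)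
    (h : F → Y → ℝ) (A : ℝ) (hA : 0 ≤ A)
    (hlip : ∀ u v : F, ∀ y : Y, |h u y - h v y| ≤ A * ‖u - v‖)
    (N : ℕ) (γ : ℝ) (U : Fin N → Set X)
    (hUcover : (⋃ i, U i) = Set.univ)
    (hUdiam : ∀ i, ∀ x ∈ U i, ∀ x' ∈ U i, dist x x' ≤ γ) :
    ∃ (K : ℕ) (D : Fin K → Set (X × Y)),
      K ≤ Fintype.card Y * N ∧
      Pairwise (Function.onFun Disjoint D) ∧
      (⋃ k, D k) = Set.univ ∧
      ∀ k : Fin K, ∀ p ∈ D k, ∀ q ∈ D k,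
        |h (T p.1) p.2 - h (T q.1) q.2| ≤ A * (γ + δ) := by
  choose g hg using Set.iUnion_eq_univ_iff.mp hUcover
  obtain ⟨D, hdisj, hcover, hfiber⟩ :=
    exists_fin_partition_of_fibers fun p : X × Y => (g p.1, p.2)
  refine ⟨_, D, by simp [Nat.mul_comm], hdisj, hcover, fun k p hp q hq => ?_⟩
  obtain ⟨hgpq, hypq⟩ := Prod.mk.inj (hfiber k p hp q hq)
  have hdist : dist p.1 q.1 ≤ γ := hUdiam (g p.1) p.1 (hg p.1) q.1 (hgpq ▸ hg q.1)
  have hnorm : ‖T p.1 - T q.1‖ ≤ γ + δ := by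
    linarith [norm_sub_le_dist_add_of_abs_sub_le hiso p.1 q.1]
  rw [← hypq]
  exact abs_sub_le_of_lipschitz_of_norm_sub_le hA hlip hnorm p.2

/-- paper's Theorem 2.2: a `δ`-isometric representation `T` composed
with a loss `h` that is `A`-Lipschitz in its first argument, together with a cover of `X`
by `N` sets of diameter at most `γ`, yields a partition of `X × Y` into at most
`|Y|·N` sets on whose cells the loss varies by at most `A·(γ + δ)`. -/
theorem stmt1 {X : Type*} [MetricSpace X] {Y : Type*} [Fintype Y]
    {F : Type*} [NormedAddCommGroup F] [NormedSpace ℝ F]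
    (T : X → F) (δ : ℝ) (hδ : 0 ≤ δ)
    (hiso : ∀ x x' : X, |‖T x - T x'‖ - dist x x'| ≤ δ)
    (h : F → Y → ℝ) (A : ℝ) (hA : 0 ≤ A)
    (hlip : ∀ u v : F, ∀ y : Y, |h u y - h v y| ≤ A * ‖u - v‖)
    (N : ℕ) (γ : ℝ) (U : Fin N → Set X)
    (hUcover : (⋃ i, U i) = Set.univ)
    (hUdiam : ∀ i, ∀ x ∈ U i, ∀ x' ∈ U i, dist x x' ≤ γ) :
    ∃ (K : ℕ) (D : Fin K → Set (X × Y)),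
      K ≤ Fintype.card Y * N ∧
      Pairwise (Function.onFun Disjoint D) ∧
      (⋃ k, D k) = Set.univ ∧
      ∀ k : Fin K, ∀ p ∈ D k, ∀ q ∈ D k,
        |h (T p.1) p.2 - h (T q.1) q.2| ≤ A * (γ + δ) :=
  stmt1_general T δ hiso h A hA hlip N γ U hUcover hUdiam
end

section
/- Let X be a subset of ℝⁿ equipped with the Euclidean norm, Y a finite set, and μ a probability measure on X × Y. Let T : X → ℝ^p be a map and h : ℝ^p × Y → ℝ a loss with 0 ≤ h ≤ M and |h(u, y) − h(v, y)| ≤ A·‖u − v‖ for all u, v ∈ ℝ^p and y ∈ Y. Let γ > 0, δ ≥ 0, P ≥ 0, C > 0, and k ∈ ℕ, and suppose X admits a measurable partition into N cells with N ≤ (2C/γ)^k such that: (i) any two points x, x' in the same cell satisfy ‖x − x'‖ ≤ γ and |‖Tx − Tx'‖ − ‖x − x'‖| ≤ δ; and (ii) for any two points x, x' in the same cell and any two distinct labels y ≠ y', |h(Tx, y) − h(Tx', y')| ≤ P. Then for every ν ∈ (0,1), with probability at least 1 − ν over an i.i.d. sample (x_1, y_1), …, (x_m, y_m) from μ, |∫_{X×Y}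 h(Tx, y) dμ(x, y) − (1/m)·∑_{j=1}^m h(Tx_j, y_j)| ≤ max{ A·(γ + δ), P } + M·√( (ln 2 · 2^{k+1} · C^k) / (γ^k · m) + 2·ln(1/ν)/m ). -/
open MeasureTheory Real
open scoped ENNReal

set_option maxHeartbeats 1000000

lemma my_integrable_of_bdd {Ω : Type*} [MeasurableSpace Ω] {μ : Measure Ω} [IsFiniteMeasure μ]
    {f : Ω → ℝ} (hf : Measurable f) {K : ℝ} (hb : ∀ z, |f z| ≤ K) : Integrable f μ := by
  refine Integrable.mono' (integrable_const K) hf.aestronglyMeasurable ?_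
  exact ae_of_all _ (fun z => by simpa using hb z)

lemma my_exp_quad {x : ℝ} (hx : |x| ≤ 1) : Real.exp x ≤ 1 + x + x ^ 2 := by
  have h := Real.exp_bound hx (n := 2) (by norm_num)
  have hs : ∑ m ∈ Finset.range 2, x ^ m / m.factorial = 1 + x := by
    simp [Finset.sum_range_succ]
  rw [hs] at h
  have := (abs_le.1 h).2
  have h2 : |x| ^ 2 = x ^ 2 := sq_abs x
  rw [h2] at this
  norm_num [Nat.factorial] at this ⊢
  nlinarith [sq_nonneg x]

lemma my_chernoff {Ω : Type*} [MeasurableSpace Ω] (μ : Measure Ω) [IsProbabilityMeasure μ]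
    (g : Ω → ℝ) (hg : Measurable g) (M : ℝ) (hM : 0 < M)
    (hb : ∀ z, |g z| ≤ M) (hmean : ∫ z, g z ∂μ = 0)
    (hvar : ∫ z, (g z) ^ 2 ∂μ ≤ M ^ 2 / 4)
    (m : ℕ) (t : ℝ) (ht0 : 0 ≤ t) (htM : t ≤ M) :
    (Measure.pi fun _ : Fin m => μ) {ω : Fin m → Ω | (m : ℝ) * t ≤ ∑ j, g (ω j)} ≤
      ENNReal.ofReal (Real.exp (-((m : ℝ) * t ^ 2) / (2 * M ^ 2))) := by
  set l : ℝ := 2 * t / (M * (M + t)) with hl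
  have hMt : 0 < M + t := by linarith
  have hl0 : 0 ≤ l := by positivity
  have hlM : l * M ≤ 1 := by
    rw [hl, div_mul_eq_mul_div, div_le_one (by positivity)]
    nlinarith
  -- pointwise bound
  have hpt : ∀ z, Real.exp (l * g z) ≤ 1 + l * g z + l ^ 2 * (g z) ^ 2 := by
    intro z
    have hx : |l * g z| ≤ 1 := by
      rw [abs_mul, abs_of_nonneg hl0]
      calc l * |g z| ≤ l * M := by
            exact mul_le_mul_of_nonneg_left (hb z) hl0
        _ ≤ 1 := hlM
    have := my_exp_quad hx
    calc Real.exp (l * g z) ≤ 1 + l * g z + (l * g z) ^ 2 := this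
      _ = 1 + l * g z + l ^ 2 * (g z) ^ 2 := by ring
  -- integrabilities
  have int_g : Integrable g μ := my_integrable_of_bdd hg hb
  have int_g2 : Integrable (fun z => (g z) ^ 2) μ := by
    refine my_integrable_of_bdd (hg.pow_const 2) (K := M ^ 2) (fun z => ?_)
    rw [abs_pow]
    exact pow_le_pow_left₀ (abs_nonneg _) (hb z) 2
  have int_exp : Integrable (fun z => Real.exp (l * g z)) μ := by
    refine my_integrable_of_bdd ((hg.const_mul l).exp) (K := Real.exp (l * M)) (fun z => ?_)
    rw [abs_of_nonneg (Real.exp_nonneg _)]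
    refine Real.exp_le_exp.2 ?_
    calc l * g z ≤ l * |g z| := mul_le_mul_of_nonneg_left (le_abs_self _) hl0
      _ ≤ l * M := mul_le_mul_of_nonneg_left (hb z) hl0
  set I : ℝ := ∫ z, Real.exp (l * g z) ∂μ with hI
  have hI0 : 0 ≤ I := integral_nonneg (fun z => (Real.exp_nonneg _))
  have hIle : I ≤ Real.exp (l ^ 2 * M ^ 2 / 4) := by
    have h1 : I ≤ ∫ z, (1 + l * g z + l ^ 2 * (g z) ^ 2) ∂μ := by
      refine integral_mono int_exp ?_ hpt
      exact (integrable_const 1).add ((int_g.const_mul l)) |>.add (int_g2.const_mul (l ^ 2))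
    have h2 : ∫ z, (1 + l * g z + l ^ 2 * (g z) ^ 2) ∂μ =
        1 + l * (∫ z, g z ∂μ) + l ^ 2 * ∫ z, (g z) ^ 2 ∂μ := by
      have e1 : ∫ z, ((1 + l * g z) + l ^ 2 * (g z) ^ 2) ∂μ =
          (∫ z, (1 + l * g z) ∂μ) + ∫ z, l ^ 2 * (g z) ^ 2 ∂μ :=
        integral_add ((integrable_const 1).add (int_g.const_mul l)) (int_g2.const_mul (l ^ 2))
      have e2 : ∫ z, (1 + l * g z) ∂μ = (∫ z, (1 : ℝ) ∂μ) + ∫ z, l * g z ∂μ :=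
        integral_add (integrable_const 1) (int_g.const_mul l)
      rw [e1, e2, integral_const_mul, integral_const_mul, integral_const]
      simp
    rw [h2, hmean] at h1
    have h3 : 1 + l * 0 + l ^ 2 * ∫ z, (g z) ^ 2 ∂μ ≤ 1 + l ^ 2 * M ^ 2 / 4 := by
      have := mul_le_mul_of_nonneg_left hvar (sq_nonneg l)
      nlinarith
    have h4 : (1 : ℝ) + l ^ 2 * M ^ 2 / 4 ≤ Real.exp (l ^ 2 * M ^ 2 / 4) := by
      have := Real.add_one_le_exp (l ^ 2 * M ^ 2 / 4)
      linarith
    linarith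
  -- product structure
  letI : MeasureSpace Ω := ⟨μ⟩
  haveI : SigmaFinite (volume : Measure Ω) := by
    show SigmaFinite μ; infer_instance
  have hXmeas : Measurable (fun ω : Fin m → Ω => ∑ j, g (ω j)) :=
    Finset.measurable_sum Finset.univ (fun j _ => hg.comp (measurable_pi_apply j))
  have hXbd : ∀ ω : Fin m → Ω, |∑ j, g (ω j)| ≤ (m : ℝ) * M := by
    intro ω
    calc |∑ j, g (ω j)| ≤ ∑ j, |g (ω j)| := Finset.abs_sum_le_sum_abs _ _
      _ ≤ ∑ _j : Fin m, M := Finset.sum_le_sum fun j _ => hb _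
      _ = (m : ℝ) * M := by simp [Finset.sum_const, nsmul_eq_mul]
  set Pm := Measure.pi fun _ : Fin m => μ with hπ
  have h_int : Integrable (fun ω : Fin m → Ω => Real.exp (l * ∑ j, g (ω j))) Pm := by
    refine my_integrable_of_bdd ((hXmeas.const_mul l).exp) (K := Real.exp (l * ((m : ℝ) * M)))
      (fun ω => ?_)
    rw [abs_of_nonneg (Real.exp_nonneg _)]
    refine Real.exp_le_exp.2 ?_
    calc l * ∑ j, g (ω j) ≤ l * |∑ j, g (ω j)| :=
          mul_le_mul_of_nonneg_left (le_abs_self _) hl0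
      _ ≤ l * ((m : ℝ) * M) := mul_le_mul_of_nonneg_left (hXbd ω) hl0
  have hmgf : ProbabilityTheory.mgf (fun ω : Fin m → Ω => ∑ j, g (ω j)) Pm l = I ^ m := by
    rw [ProbabilityTheory.mgf]
    have hprod : ∀ ω : Fin m → Ω, Real.exp (l * ∑ j, g (ω j)) =
        ∏ j, Real.exp (l * g (ω j)) := by
      intro ω; rw [Finset.mul_sum, Real.exp_sum]
    have := MeasureTheory.integral_fintype_prod_eq_pow (𝕜 := ℝ) (ι := Fin m) (μ := μ)
      (fun x : Ω => Real.exp (l * g x))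
    simp only [Fintype.card_fin] at this
    calc ∫ ω, Real.exp (l * ∑ j, g (ω j)) ∂Pm
        = ∫ ω : Fin m → Ω, ∏ j, Real.exp (l * g (ω j)) := by
          simp_rw [hprod]; rfl
      _ = I ^ m := this
  have key := ProbabilityTheory.measure_ge_le_exp_mul_mgf (μ := Pm)
    (X := fun ω : Fin m → Ω => ∑ j, g (ω j)) ((m : ℝ) * t) hl0 h_int
  rw [hmgf] at key
  have hexp : Real.exp (-l * ((m : ℝ) * t)) * I ^ m ≤
      Real.exp (-((m : ℝ) * t ^ 2) / (2 * M ^ 2)) := by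
    have p1 : I ^ m ≤ Real.exp (l ^ 2 * M ^ 2 / 4) ^ m := pow_le_pow_left₀ hI0 hIle m
    have p2 : Real.exp (l ^ 2 * M ^ 2 / 4) ^ m = Real.exp ((m : ℝ) * (l ^ 2 * M ^ 2 / 4)) :=
      (Real.exp_nat_mul _ m).symm
    have hunit : t ^ 2 / (2 * M ^ 2) ≤ l * t - l ^ 2 * M ^ 2 / 4 := by
      have hrw : l * t - l ^ 2 * M ^ 2 / 4 - t ^ 2 / (2 * M ^ 2) =
          t ^ 2 * (M ^ 2 + 2 * M * t - t ^ 2) / (2 * M ^ 2 * (M + t) ^ 2) := by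
        rw [hl]; field_simp; ring
      have h5 : 0 ≤ M ^ 2 + 2 * M * t - t ^ 2 := by nlinarith [mul_nonneg ht0 (by linarith : (0:ℝ) ≤ 2 * M - t)]
      have hnum : 0 ≤ t ^ 2 * (M ^ 2 + 2 * M * t - t ^ 2) := mul_nonneg (sq_nonneg t) h5
      have hden : 0 < 2 * M ^ 2 * (M + t) ^ 2 := by positivity
      have := div_nonneg hnum hden.le
      linarith [hrw ▸ this]
    have hm0 : (0 : ℝ) ≤ (m : ℝ) := Nat.cast_nonneg m
    have p4 : -l * ((m : ℝ) * t) + (m : ℝ) * (l ^ 2 * M ^ 2 / 4) ≤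
        -((m : ℝ) * t ^ 2) / (2 * M ^ 2) := by
      have h6 := mul_le_mul_of_nonneg_left hunit hm0
      have e1 : -((m : ℝ) * t ^ 2) / (2 * M ^ 2) = -((m : ℝ) * (t ^ 2 / (2 * M ^ 2))) := by ring
      have e2 : -l * ((m : ℝ) * t) + (m : ℝ) * (l ^ 2 * M ^ 2 / 4) =
          -((m : ℝ) * (l * t - l ^ 2 * M ^ 2 / 4)) := by ring
      rw [e1, e2]
      exact neg_le_neg h6
    calc Real.exp (-l * ((m : ℝ) * t)) * I ^ m
        ≤ Real.exp (-l * ((m : ℝ) * t)) * Real.exp ((m : ℝ) * (l ^ 2 * M ^ 2 / 4)) := by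
          exact mul_le_mul_of_nonneg_left (p1.trans_eq p2) (Real.exp_nonneg _)
      _ = Real.exp (-l * ((m : ℝ) * t) + (m : ℝ) * (l ^ 2 * M ^ 2 / 4)) := (Real.exp_add _ _).symm
      _ ≤ Real.exp (-((m : ℝ) * t ^ 2) / (2 * M ^ 2)) := Real.exp_le_exp.2 p4
  refine (ENNReal.le_ofReal_iff_toReal_le (measure_ne_top _ _) (Real.exp_nonneg _)).2 ?_
  exact key.trans hexp


/-- paper's Theorem 3.2, the main result: generalization bound for DNNs
with a covering of the instance space alone.  Cells may mix labels: `P` bounds the loss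
difference between same-cell points with distinct labels (the pairwise error function
`PE(δ)`), while `A(γ+δ)` bounds the loss difference between same-cell points (via the
Lipschitz property of `h` and the cell-wise `δ`-near-isometry of `T`).  The covering
number factor `|Y|` disappears from the second term. -/
theorem stmt3 {n p : ℕ} (X : Set (EuclideanSpace ℝ (Fin n)))
    {Y : Type*} [Fintype Y] [MeasurableSpace Y]
    (μ : Measure (X × Y)) [IsProbabilityMeasure μ]
    (T : X → EuclideanSpace ℝ (Fin p))
    (h : EuclideanSpace ℝ (Fin p) → Y → ℝ) (M A : ℝ)
    (hbd : ∀ u y, 0 ≤ h u y ∧ h u y ≤ M)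
    (hlip : ∀ u v : EuclideanSpace ℝ (Fin p), ∀ y : Y, |h u y - h v y| ≤ A * ‖u - v‖)
    (hmeasℓ : Measurable fun z : X × Y => h (T z.1) z.2)
    (γ δ P C : ℝ) (k : ℕ) (hγ : 0 < γ) (hδ : 0 ≤ δ) (hP : 0 ≤ P) (hC : 0 < C)
    (N : ℕ) (cells : Fin N → Set X)
    (hcellsmeas : ∀ i, MeasurableSet (cells i))
    (hN : (N : ℝ) ≤ (2 * C / γ) ^ k)
    (hdisj : Pairwise (Function.onFun Disjoint cells))
    (hcover : (⋃ i, cells i) = Set.univ)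
    (hcell : ∀ i : Fin N, ∀ x ∈ cells i, ∀ x' ∈ cells i,
      ‖(x : EuclideanSpace ℝ (Fin n)) - (x' : EuclideanSpace ℝ (Fin n))‖ ≤ γ ∧
      |‖T x - T x'‖ - ‖(x : EuclideanSpace ℝ (Fin n)) - (x' : EuclideanSpace ℝ (Fin n))‖| ≤ δ)
    (hpair : ∀ i : Fin N, ∀ x ∈ cells i, ∀ x' ∈ cells i, ∀ y y' : Y, y ≠ y' →
      |h (T x) y - h (T x') y'| ≤ P)
    (m : ℕ) (hm : 0 < m) (ν : ℝ) (hν : ν ∈ Set.Ioo (0 : ℝ) 1) :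
    ENNReal.ofReal (1 - ν) ≤
      (Measure.pi fun _ : Fin m => μ)
        {ω : Fin m → X × Y |
          |(∫ z, h (T z.1) z.2 ∂μ) - (1 / m) * ∑ j, h (T (ω j).1) (ω j).2| ≤
            max (A * (γ + δ)) P +
              M * Real.sqrt
                ((Real.log 2 * 2 ^ (k + 1) * C ^ k) / (γ ^ k * m) +
                  2 * Real.log (1 / ν) / m)} := by
  obtain ⟨hν0, hν1⟩ := hν
  set f : X × Y → ℝ := fun z => h (T z.1) z.2 with hf
  simp only [show ∀ w : X × Y, h (T w.1) w.2 = f w from fun _ => rfl]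
  -- nonemptiness
  have hne : Nonempty (X × Y) := by
    by_contra hcon
    rw [not_nonempty_iff] at hcon
    have h1 : μ Set.univ = 1 := measure_univ
    rw [Set.univ_eq_empty_iff.mpr hcon, measure_empty] at h1
    exact zero_ne_one h1
  obtain ⟨z0⟩ := hne
  have hM0 : 0 ≤ M := le_trans (hbd 0 z0.2).1 (hbd 0 z0.2).2
  have hN1 : 1 ≤ N := by
    have hz : (z0.1 : X) ∈ ⋃ i, cells i := by rw [hcover]; trivial
    obtain ⟨i, -⟩ := Set.mem_iUnion.1 hz
    exact i.pos
  have hpow1 : (1 : ℝ) ≤ (2 * C / γ) ^ k := le_trans (by exact_mod_cast hN1) hN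
  set L : ℝ := Real.log 2 + Real.log (1 / ν) with hL
  have hlogν : 0 < Real.log (1 / ν) := by
    refine Real.log_pos ?_
    rw [lt_div_iff₀ hν0]; linarith
  have hL0 : 0 < L := add_pos (Real.log_pos one_lt_two) hlogν
  have hm' : (0 : ℝ) < m := Nat.cast_pos.2 hm
  set R : ℝ := (Real.log 2 * 2 ^ (k + 1) * C ^ k) / (γ ^ k * m) + 2 * Real.log (1 / ν) / m
    with hR
  have hRge : 2 * L / m ≤ R := by
    have h1 : (Real.log 2 * 2 ^ (k + 1) * C ^ k) / (γ ^ k * m) =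
        (2 * Real.log 2 / m) * (2 * C / γ) ^ k := by
      rw [div_pow, mul_pow]
      field_simp
      ring
    have h2 : 2 * Real.log 2 / m ≤ (2 * Real.log 2 / m) * (2 * C / γ) ^ k := by
      nth_rewrite 1 [← mul_one (2 * Real.log 2 / m)]
      exact mul_le_mul_of_nonneg_left hpow1
        (by positivity)
    have h3 : 2 * L / m = 2 * Real.log 2 / m + 2 * Real.log (1 / ν) / m := by
      rw [hL]; ring
    rw [hR, h1, h3]
    linarith
  set B' : ℝ := M * Real.sqrt (2 * L / m) with hB'
  set B : ℝ := max (A * (γ + δ)) P + M * Real.sqrt R with hB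
  have hmax0 : 0 ≤ max (A * (γ + δ)) P := le_max_iff.2 (Or.inr hP)
  have hB'B : B' ≤ B := by
    have h1 : M * Real.sqrt (2 * L / m) ≤ M * Real.sqrt R :=
      mul_le_mul_of_nonneg_left (Real.sqrt_le_sqrt hRge) hM0
    rw [hB', hB]; linarith
  -- basic bounds on f and its mean
  have hf0 : ∀ z, 0 ≤ f z := fun z => (hbd _ _).1
  have hfM : ∀ z, f z ≤ M := fun z => (hbd _ _).2
  have habs : ∀ z, |f z| ≤ M := fun z => abs_le.2 ⟨by linarith [hf0 z], hfM z⟩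
  have int_f : Integrable f μ := my_integrable_of_bdd hmeasℓ habs
  set c : ℝ := ∫ z, f z ∂μ with hc
  have hc0 : 0 ≤ c := integral_nonneg hf0
  have hcM : c ≤ M := by
    have := integral_mono int_f (integrable_const M) hfM
    simpa using this
  have hsum_bd : ∀ ω : Fin m → X × Y,
      0 ≤ (1 / (m : ℝ)) * ∑ j, f (ω j) ∧ (1 / (m : ℝ)) * ∑ j, f (ω j) ≤ M := by
    intro ω
    have h1 : 0 ≤ ∑ j, f (ω j) := Finset.sum_nonneg fun j _ => hf0 _
    have h2 : ∑ j, f (ω j) ≤ (m : ℝ) * M := by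
      calc ∑ j, f (ω j) ≤ ∑ _j : Fin m, M := Finset.sum_le_sum fun j _ => hfM _
        _ = (m : ℝ) * M := by simp [Finset.sum_const, nsmul_eq_mul]
    refine ⟨by positivity, ?_⟩
    rw [one_div, inv_mul_le_iff₀ hm']
    exact h2
  by_cases hcase : M ≤ B'
  · -- trivial case : the event is everything
    have hU : {ω : Fin m → X × Y | |c - 1 / (m : ℝ) * ∑ j, f (ω j)| ≤ B} = Set.univ := by
      ext ω
      simp only [Set.mem_setOf_eq, Set.mem_univ, iff_true]
      obtain ⟨hs0, hsM⟩ := hsum_bd ω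
      have : |c - 1 / (m : ℝ) * ∑ j, f (ω j)| ≤ M :=
        abs_le.2 ⟨by linarith, by linarith⟩
      linarith
    rw [hU, measure_univ]
    exact ENNReal.ofReal_le_one.2 (by linarith)
  · push_neg at hcase
    have hB'0 : 0 ≤ B' := mul_nonneg hM0 (Real.sqrt_nonneg _)
    have hM : 0 < M := lt_of_le_of_lt hB'0 hcase
    set g : X × Y → ℝ := fun z => f z - c with hg
    have hgmeas : Measurable g := hmeasℓ.sub measurable_const
    have hgb : ∀ z, |g z| ≤ M := fun z =>
      abs_le.2 ⟨by simp only [hg]; linarith [hf0 z], by simp only [hg]; linarith [hfM z]⟩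
    have hgmean : ∫ z, g z ∂μ = 0 := by
      rw [hg]
      rw [integral_sub int_f (integrable_const c), integral_const]
      simp
      exact sub_self _
    have int_f2 : Integrable (fun z => f z ^ 2) μ := by
      refine my_integrable_of_bdd (hmeasℓ.pow_const 2) (K := M ^ 2) (fun z => ?_)
      rw [abs_pow]
      exact pow_le_pow_left₀ (abs_nonneg _) (habs z) 2
    have hvar : ∫ z, (g z) ^ 2 ∂μ ≤ M ^ 2 / 4 := by
      have e : ∀ z, (g z) ^ 2 = (f z ^ 2 - (2 * c) * f z) + c ^ 2 := by
        intro z; simp only [hg]; ring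
      have hf2c : ∫ z, f z ^ 2 ∂μ ≤ M * c := by
        have h1 : ∀ z, f z ^ 2 ≤ M * f z := fun z => by nlinarith [hf0 z, hfM z]
        have h2 := integral_mono int_f2 (int_f.const_mul M) h1
        rwa [integral_const_mul, ← hc] at h2
      calc ∫ z, (g z) ^ 2 ∂μ
          = ∫ z, ((f z ^ 2 - (2 * c) * f z) + c ^ 2) ∂μ := by
            exact integral_congr_ae (ae_of_all _ e)
        _ = (∫ z, (f z ^ 2 - (2 * c) * f z) ∂μ) + c ^ 2 := by
            have e1 : ∫ z, ((f z ^ 2 - (2 * c) * f z) + c ^ 2) ∂μ =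
                (∫ z, (f z ^ 2 - (2 * c) * f z) ∂μ) + ∫ _z, (c ^ 2 : ℝ) ∂μ :=
              integral_add (int_f2.sub (int_f.const_mul (2 * c))) (integrable_const _)
            rw [e1, integral_const]
            simp
        _ = (∫ z, f z ^ 2 ∂μ) - (2 * c) * c + c ^ 2 := by
            have e2 : ∫ z, (f z ^ 2 - (2 * c) * f z) ∂μ =
                (∫ z, f z ^ 2 ∂μ) - ∫ z, (2 * c) * f z ∂μ :=
              integral_sub int_f2 (int_f.const_mul (2 * c))
            rw [e2, integral_const_mul, ← hc]
        _ ≤ M * c - (2 * c) * c + c ^ 2 := by linarith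
        _ ≤ M ^ 2 / 4 := by nlinarith [sq_nonneg (M - 2 * c)]
    have ht0 : 0 ≤ B' := hB'0
    have htM : B' ≤ M := hcase.le
    have hexpL : Real.exp (-((m : ℝ) * B' ^ 2) / (2 * M ^ 2)) = ν / 2 := by
      have hsq : B' ^ 2 = M ^ 2 * (2 * L / m) := by
        rw [hB', mul_pow, Real.sq_sqrt (by positivity)]
      have h1 : ((m : ℝ) * B' ^ 2) / (2 * M ^ 2) = L := by
        rw [hsq]; field_simp
      rw [neg_div, h1, hL, neg_add, Real.exp_add, Real.exp_neg, Real.exp_neg,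
        Real.exp_log two_pos, Real.exp_log (by positivity : (0 : ℝ) < 1 / ν)]
      rw [one_div, inv_inv]
      ring
    have tail1 := my_chernoff μ g hgmeas M hM hgb hgmean hvar m B' ht0 htM
    have tail2 : (Measure.pi fun _ : Fin m => μ)
        {ω : Fin m → X × Y | (m : ℝ) * B' ≤ ∑ j, -g (ω j)} ≤
        ENNReal.ofReal (Real.exp (-((m : ℝ) * B' ^ 2) / (2 * M ^ 2))) := by
      refine my_chernoff μ (fun z => -g z) hgmeas.neg M hM (fun z => ?_) ?_ ?_ m B' ht0 htM
      · rw [abs_neg]; exact hgb z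
      · rw [integral_neg, hgmean, neg_zero]
      · calc ∫ z, (-g z) ^ 2 ∂μ = ∫ z, (g z) ^ 2 ∂μ :=
            integral_congr_ae (ae_of_all _ fun z => by ring)
          _ ≤ M ^ 2 / 4 := hvar
    rw [hexpL] at tail1 tail2
    set Pm := Measure.pi fun _ : Fin m => μ with hPm
    set E := {ω : Fin m → X × Y | |c - 1 / (m : ℝ) * ∑ j, f (ω j)| ≤ B} with hE
    have hsub : Eᶜ ⊆ {ω : Fin m → X × Y | (m : ℝ) * B' ≤ ∑ j, g (ω j)} ∪
        {ω : Fin m → X × Y | (m : ℝ) * B' ≤ ∑ j, -g (ω j)} := by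
      intro ω hω
      simp only [hE, Set.mem_compl_iff, Set.mem_setOf_eq, not_le] at hω
      have hms : (m : ℝ) * (1 / (m : ℝ) * ∑ j, f (ω j)) = ∑ j, f (ω j) := by
        field_simp
      have hsumg : ∑ j, g (ω j) = (∑ j, f (ω j)) - (m : ℝ) * c := by
        simp only [hg]
        rw [Finset.sum_sub_distrib]
        simp [Finset.sum_const, nsmul_eq_mul]
      have hsumg' : ∑ j, -g (ω j) = (m : ℝ) * c - ∑ j, f (ω j) := by
        rw [Finset.sum_neg_distrib, hsumg]; ring
      rcases lt_abs.1 (lt_of_le_of_lt hB'B hω) with h1 | h1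
      · -- c - emp > B' : mean exceeds empirical
        right
        simp only [Set.mem_setOf_eq]
        rw [hsumg']
        have := mul_lt_mul_of_pos_left h1 hm'
        rw [mul_sub, hms] at this
        linarith
      · left
        simp only [Set.mem_setOf_eq]
        rw [hsumg]
        rw [neg_sub] at h1
        have := mul_lt_mul_of_pos_left h1 hm'
        rw [mul_sub, hms] at this
        linarith
    have hEc : Pm Eᶜ ≤ ENNReal.ofReal ν := by
      calc Pm Eᶜ ≤ Pm ({ω : Fin m → X × Y | (m : ℝ) * B' ≤ ∑ j, g (ω j)} ∪
          {ω : Fin m → X × Y | (m : ℝ) * B' ≤ ∑ j, -g (ω j)}) := measure_mono hsub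
        _ ≤ Pm {ω : Fin m → X × Y | (m : ℝ) * B' ≤ ∑ j, g (ω j)} +
            Pm {ω : Fin m → X × Y | (m : ℝ) * B' ≤ ∑ j, -g (ω j)} := measure_union_le _ _
        _ ≤ ENNReal.ofReal (ν / 2) + ENNReal.ofReal (ν / 2) := add_le_add tail1 tail2
        _ = ENNReal.ofReal ν := by
            rw [← ENNReal.ofReal_add (by linarith) (by linarith)]
            norm_num
    have huniv : (1 : ℝ≥0∞) ≤ Pm E + Pm Eᶜ := by
      have h1 := measure_union_le (μ := Pm) E Eᶜ
      rw [Set.union_compl_self] at h1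
      calc (1 : ℝ≥0∞) = Pm Set.univ := measure_univ.symm
        _ ≤ Pm E + Pm Eᶜ := h1
    have hfinal : (1 : ℝ≥0∞) ≤ Pm E + ENNReal.ofReal ν :=
      huniv.trans (add_le_add le_rfl hEc)
    have hofr : ENNReal.ofReal (1 - ν) = 1 - ENNReal.ofReal ν := by
      rw [ENNReal.ofReal_sub _ hν0.le, ENNReal.ofReal_one]
    rw [hofr]
    exact tsub_le_iff_right.2 hfinal
end

section
/- Consider the ReLU network T with weight matrices W_1, …, W_L, each having positive ℓ²-operator norm ‖W_i‖₂ > 0. Let x ∈ ℝ^{n_0} be such that every hidden pre-activation is nonzero: (W_l h_{l−1}(x))_k ≠ 0 for all 1 ≤ l ≤ L−1 and all k. Define r(x) = min over all 1 ≤ l ≤ L−1 and all k of |(W_l h_{l−1}(x))_k| / ∏_{i=1}^{l} ‖W_i‖₂. Then r(x) > 0, and for every x' ∈ ℝ^{n_0} with ‖x − x'‖ < r(x): the activation patterns agree, τ_l(x') = τ_l(x) for all l = 1, …, L−1, and consequently T(x) − T(x') = W_L D_{L−1} W_{L−1} ⋯ D_1 W_1 (x − x'), where D_l = D_l(x). In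 other words, T agrees with a fixed linear map on the open ball of radius r(x) around x. -/
noncomputable section
open scoped Classical

/-- Coordinatewise ReLU on Euclidean space. -/
def relu {d : ℕ} (v : EuclideanSpace ℝ (Fin d)) : EuclideanSpace ℝ (Fin d) :=
  WithLp.toLp 2 (fun i => max (v i) 0)

/-- Hidden activations of the ReLU network: `netAct W 0 x = x`,
`netAct W (l+1) x = ReLU(W_l · netAct W l x)` (so `netAct W l` is the paper's `h_l`,
with `W l` the paper's `W_{l+1}`). -/
def netAct {n : ℕ → ℕ} (W : ∀ l : ℕ, Matrix (Fin (n (l + 1))) (Fin (n l)) ℝ) :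
    (l : ℕ) → EuclideanSpace ℝ (Fin (n 0)) → EuclideanSpace ℝ (Fin (n l))
  | 0 => fun x => x
  | l + 1 => fun x => relu (WithLp.toLp 2 ((W l).mulVec (netAct W l x)))

/-- The ReLU network with `L` weight layers: `T x = W_L · h_{L-1}(x)`. -/
def netT {n : ℕ → ℕ} (W : ∀ l : ℕ, Matrix (Fin (n (l + 1))) (Fin (n l)) ℝ) (L : ℕ)
    (x : EuclideanSpace ℝ (Fin (n 0))) : EuclideanSpace ℝ (Fin (n (L - 1 + 1))) :=
  WithLp.toLp 2 ((W (L - 1)).mulVec (netAct W (L - 1) x))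

/-- The 0/1 activation pattern of `x` at hidden layer `l+1` (the paper's `τ_{l+1}(x)`). -/
def actPattern {n : ℕ → ℕ} (W : ∀ l : ℕ, Matrix (Fin (n (l + 1))) (Fin (n l)) ℝ)
    (x : EuclideanSpace ℝ (Fin (n 0))) (l : ℕ) : Fin (n (l + 1)) → ℝ :=
  fun k => if 0 < (W l).mulVec (netAct W l x) k then 1 else 0

/-- The linearized network `x' ↦ D_l W_l ⋯ D_1 W_1 x'` for diagonal matrices
`D_l = diag(d l)`. -/
def linAct {n : ℕ → ℕ} (W : ∀ l : ℕ, Matrix (Fin (n (l + 1))) (Fin (n l)) ℝ)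
    (d : ∀ l : ℕ, Fin (n (l + 1)) → ℝ) :
    (l : ℕ) → EuclideanSpace ℝ (Fin (n 0)) → EuclideanSpace ℝ (Fin (n l))
  | 0 => fun x => x
  | l + 1 => fun x => WithLp.toLp 2 ((Matrix.diagonal (d l)).mulVec ((W l).mulVec (linAct W d l x)))


/-- ℓ²→ℓ² operator norm (largest singular value) of a matrix. -/
def l2OpNorm {a b : ℕ} (W : Matrix (Fin a) (Fin b) ℝ) : ℝ :=
  ‖LinearMap.toContinuousLinearMap (Matrix.toEuclideanLin W)‖

/-! Each hidden pre-activation of `x'` differs from that of `x` by at most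
`∏_{i ≤ l} ‖W_i‖₂ · ‖x - x'‖`, as long as the activation patterns agree on the earlier layers
(then the ReLUs act on the difference as the fixed 0/1 diagonals `D_i`, which do not increase
norms). Inside the ball of radius `r(x)` this bound is smaller than the pre-activation of `x`
itself, so no sign can flip, and induction over the layers gives the pattern agreement. -/

open Matrix

theorem lt_ciInf_of_finite {ι α : Type*} [Nonempty ι] [Finite ι]
    [ConditionallyCompleteLinearOrder α] {f : ι → α} {a : α} (h : ∀ i, a < f i) :
    a < ⨅ i, f i := by
  obtain ⟨i, hi⟩ := exists_eq_ciInf_of_finite (f := f)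
  exact hi ▸ h i

theorem pos_iff_pos_of_abs_sub_lt_abs {a b : ℝ} (h : |a - b| < |a|) : 0 < b ↔ 0 < a := by
  constructor <;> intro hpos <;> cases abs_cases a <;> cases abs_cases (a - b) <;> linarith

theorem max_zero_sub_max_zero_of_pos_iff {a b : ℝ} (h : 0 < b ↔ 0 < a) :
    max a 0 - max b 0 = (if 0 < a then 1 else 0) * (a - b) := by
  split_ifs with ha
  · rw [max_eq_left ha.le, max_eq_left (h.2 ha).le, one_mul]
  · rw [max_eq_right (not_lt.1 ha), max_eq_right (not_lt.1 (mt h.1 ha)), zero_mul, sub_self]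

theorem norm_toLp_diagonal_mulVec_le {ι : Type*} [Fintype ι] [DecidableEq ι] {d : ι → ℝ}
    (hd : ∀ k, |d k| ≤ 1) (u : ι → ℝ) :
    ‖WithLp.toLp 2 (Matrix.diagonal d *ᵥ u)‖ ≤ ‖WithLp.toLp 2 u‖ := by
  simp only [EuclideanSpace.norm_eq, Matrix.mulVec_diagonal, Real.norm_eq_abs, sq_abs]
  refine Real.sqrt_le_sqrt (Finset.sum_le_sum fun k _ => ?_)
  rw [mul_pow, ← sq_abs (d k)]
  exact mul_le_of_le_one_left (sq_nonneg _) (pow_le_one₀ (abs_nonneg _) (hd k))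

theorem norm_toLp_mulVec_le {a b : ℕ} (M : Matrix (Fin a) (Fin b) ℝ)
    (v : EuclideanSpace ℝ (Fin b)) : ‖WithLp.toLp 2 (M *ᵥ v)‖ ≤ l2OpNorm M * ‖v‖ :=
  (Matrix.toEuclideanLin M).toContinuousLinearMap.le_opNorm v

theorem pos_of_l2OpNorm_pos {a b : ℕ} {M : Matrix (Fin a) (Fin b) ℝ} (h : 0 < l2OpNorm M) :
    0 < a := by
  by_contra! ha
  obtain rfl : a = 0 := by omega
  rw [l2OpNorm, Subsingleton.elim (Matrix.toEuclideanLin M).toContinuousLinearMap 0,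
    norm_zero] at h
  exact lt_irrefl _ h

section ReLUNetwork

variable {n : ℕ → ℕ} (W : ∀ l : ℕ, Matrix (Fin (n (l + 1))) (Fin (n l)) ℝ)

theorem abs_actPattern_le_one (x : EuclideanSpace ℝ (Fin (n 0))) (l : ℕ) (k : Fin (n (l + 1))) :
    |actPattern W x l k| ≤ 1 := by
  unfold actPattern
  split_ifs <;> norm_num

theorem norm_linAct_le {d : ∀ l : ℕ, Fin (n (l + 1)) → ℝ} (hd : ∀ l k, |d l k| ≤ 1) (m : ℕ)
    (v : EuclideanSpace ℝ (Fin (n 0))) :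
    ‖linAct W d m v‖ ≤ (∏ i ∈ Finset.range m, l2OpNorm (W i)) * ‖v‖ := by
  induction m with
  | zero => simp [linAct]
  | succ m ih =>
    calc ‖linAct W d (m + 1) v‖
        ≤ ‖WithLp.toLp 2 (W m *ᵥ linAct W d m v)‖ := norm_toLp_diagonal_mulVec_le (hd m) _
      _ ≤ l2OpNorm (W m) * ‖linAct W d m v‖ := norm_toLp_mulVec_le _ _
      _ ≤ l2OpNorm (W m) * ((∏ i ∈ Finset.range m, l2OpNorm (W i)) * ‖v‖) := by
        gcongr
        exact norm_nonneg _
      _ = (∏ i ∈ Finset.range (m + 1), l2OpNorm (W i)) * ‖v‖ := by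
        rw [Finset.prod_range_succ]
        ring

variable {x x' : EuclideanSpace ℝ (Fin (n 0))}

theorem netAct_sub_netAct_eq_linAct {m : ℕ}
    (hsign : ∀ l < m, ∀ k, (0 < (W l *ᵥ netAct W l x') k ↔ 0 < (W l *ᵥ netAct W l x) k)) :
    netAct W m x - netAct W m x' = linAct W (actPattern W x) m (x - x') := by
  induction m with
  | zero => rfl
  | succ m ih =>
    have hprev := ih fun l hl => hsign l (by omega)
    ext k
    have hrelu := max_zero_sub_max_zero_of_pos_iff (hsign m (by omega) k)
    simp only [netAct, linAct, relu, PiLp.sub_apply, Matrix.mulVec_diagonal, ← hprev]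
    rw [hrelu, WithLp.ofLp_sub, Matrix.mulVec_sub]
    rfl

theorem abs_preAct_sub_preAct_le {l : ℕ}
    (hsign : ∀ j < l, ∀ k, (0 < (W j *ᵥ netAct W j x') k ↔ 0 < (W j *ᵥ netAct W j x) k))
    (k : Fin (n (l + 1))) :
    |(W l *ᵥ netAct W l x) k - (W l *ᵥ netAct W l x') k| ≤
      (∏ i ∈ Finset.range (l + 1), l2OpNorm (W i)) * ‖x - x'‖ := by
  set δ := netAct W l x - netAct W l x' with hδ
  calc |(W l *ᵥ netAct W l x) k - (W l *ᵥ netAct W l x') k|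
      = ‖WithLp.toLp 2 (W l *ᵥ δ) k‖ := by
        rw [Real.norm_eq_abs, WithLp.ofLp_sub, Matrix.mulVec_sub]
        rfl
    _ ≤ ‖WithLp.toLp 2 (W l *ᵥ δ)‖ := PiLp.norm_apply_le _ k
    _ ≤ l2OpNorm (W l) * ‖δ‖ := norm_toLp_mulVec_le _ _
    _ ≤ l2OpNorm (W l) * ((∏ i ∈ Finset.range l, l2OpNorm (W i)) * ‖x - x'‖) := by
      rw [hδ, netAct_sub_netAct_eq_linAct W hsign]
      gcongr
      · exact norm_nonneg _
      · exact norm_linAct_le W (abs_actPattern_le_one W x) l _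
    _ = (∏ i ∈ Finset.range (l + 1), l2OpNorm (W i)) * ‖x - x'‖ := by
      rw [Finset.prod_range_succ]
      ring

theorem pos_preAct_iff_of_forall_mul_norm_sub_lt {m : ℕ}
    (hclose : ∀ l < m, ∀ k : Fin (n (l + 1)),
      (∏ i ∈ Finset.range (l + 1), l2OpNorm (W i)) * ‖x - x'‖ < |(W l *ᵥ netAct W l x) k|) :
    ∀ l < m, ∀ k, (0 < (W l *ᵥ netAct W l x') k ↔ 0 < (W l *ᵥ netAct W l x) k) := by
  intro l
  induction l using Nat.strong_induction_on with
  | _ l ih =>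
    intro hl k
    exact pos_iff_pos_of_abs_sub_lt_abs
      ((abs_preAct_sub_preAct_le W (fun j hj => ih j hj (by omega)) k).trans_lt (hclose l hl k))

end ReLUNetwork

/-- paper's Lemma 3.3: if every hidden pre-activation of `x` is nonzero,
then with `r(x) = min_{l,k} |(W_l h_{l-1}(x))_k| / ∏_{i ≤ l} ‖W_i‖₂` one has `r(x) > 0`,
and every `x'` with `‖x − x'‖ < r(x)` has the same activation pattern as `x` at all hidden
layers, so that `T(x) − T(x') = W_L D_{L-1} W_{L-1} ⋯ D_1 W_1 (x − x')`:  the ReLU network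
agrees with a fixed linear map on the open ball of radius `r(x)` around `x`. -/
theorem stmt8 {n : ℕ → ℕ} (L : ℕ) (hL : 2 ≤ L)
    (W : ∀ l : ℕ, Matrix (Fin (n (l + 1))) (Fin (n l)) ℝ)
    (hWpos : ∀ l < L, 0 < l2OpNorm (W l))
    (x : EuclideanSpace ℝ (Fin (n 0)))
    (hx : ∀ l < L - 1, ∀ k : Fin (n (l + 1)), (W l).mulVec (netAct W l x) k ≠ 0)
    (r : ℝ)
    (hr : r = ⨅ q : Σ l : Fin (L - 1), Fin (n ((l : ℕ) + 1)),
      |(W (q.1 : ℕ)).mulVec (netAct W (q.1 : ℕ) x) q.2| /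
        ∏ i ∈ Finset.range ((q.1 : ℕ) + 1), l2OpNorm (W i)) :
    0 < r ∧
    ∀ x' : EuclideanSpace ℝ (Fin (n 0)), ‖x - x'‖ < r →
      (∀ l < L - 1, ∀ k : Fin (n (l + 1)),
        (0 < (W l).mulVec (netAct W l x') k ↔ 0 < (W l).mulVec (netAct W l x) k)) ∧
      netT W L x - netT W L x' =
        (W (L - 1)).mulVec (linAct W (actPattern W x) (L - 1) (x - x')) := by
  have hprod_pos : ∀ l < L - 1, 0 < ∏ i ∈ Finset.range (l + 1), l2OpNorm (W i) :=
    fun l hl => Finset.prod_pos fun i hi => hWpos i (by rw [Finset.mem_range] at hi; omega)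
  have : Nonempty (Σ l : Fin (L - 1), Fin (n ((l : ℕ) + 1))) :=
    ⟨⟨⟨0, by omega⟩, ⟨0, pos_of_l2OpNorm_pos (hWpos 0 (by omega))⟩⟩⟩
  have hr_le : ∀ l (hl : l < L - 1) (k : Fin (n (l + 1))),
      (∏ i ∈ Finset.range (l + 1), l2OpNorm (W i)) * r ≤ |(W l *ᵥ netAct W l x) k| :=
    fun l hl k => (le_div_iff₀' (hprod_pos l hl)).1 <|
      hr ▸ ciInf_le (Set.finite_range _).bddBelow
        (⟨⟨l, hl⟩, k⟩ : Σ l : Fin (L - 1), Fin (n ((l : ℕ) + 1)))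
  refine ⟨hr ▸ lt_ciInf_of_finite fun q =>
    div_pos (abs_pos.2 (hx q.1 q.1.2 q.2)) (hprod_pos q.1 q.1.2), fun x' hx' => ?_⟩
  have hsign := pos_preAct_iff_of_forall_mul_norm_sub_lt W fun l hl k =>
    (mul_lt_mul_of_pos_left hx' (hprod_pos l hl)).trans_le (hr_le l hl k)
  refine ⟨hsign, ?_⟩
  rw [← netAct_sub_netAct_eq_linAct W hsign, WithLp.ofLp_sub, Matrix.mulVec_sub]
  rfl

end
end
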